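/- For every k ≥ 0, k · (J⁰(k))² ≤ 2^(-1/2). -/

import Mathlib

/-!
For `k ≤ 9/5` the bound follows from `1 - k²/4 ≤ J₀(k) ≤ (1 - k²/8)²`: the partial sums of the
power series of `J₀` bound it alternately, because the Taylor polynomials of `cos` do and
`∫₀^π cos^(2i) θ dθ` is a Wallis integral.

For `k ≥ 9/5` use the energy `W(x) = x (J₀² + J₁²) - J₀ J₁ + J₀² / (2x)`, where `J₁ = -J₀'`.
Bessel's equation gives `W' = -J₀² / (2x²) ≤ 0`, and `W(x) - x J₀² = ((2x J₁ - J₀)² + J₀²) / (4x)`,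
so `k J₀(k)² ≤ W(k) ≤ W(9/5) ≤ 7/10 < 2^(-1/2)`, where `W(9/5)` is estimated with the
series bounds for `J₀` and `J₁`.
-/

open MeasureTheory Real

/-- The zeroth-order Bessel function `J⁰(k) = (1/π) ∫₀^π cos(k cos θ) dθ`. -/
noncomputable def J0 (k : ℝ) : ℝ :=
  (1 / Real.pi) * ∫ θ in (0:ℝ)..Real.pi, Real.cos (k * Real.cos θ)

open Finset
open scoped Nat

noncomputable def cosTaylor (n : ℕ) (x : ℝ) : ℝ :=
  ∑ i ∈ range n, (-1) ^ i * x ^ (2 * i) / (2 * i)!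

noncomputable def sinTaylor (n : ℕ) (x : ℝ) : ℝ :=
  ∑ i ∈ range n, (-1) ^ i * x ^ (2 * i + 1) / (2 * i + 1)!

@[fun_prop]
theorem continuous_cosTaylor (n : ℕ) : Continuous (cosTaylor n) := by
  unfold cosTaylor; fun_prop

@[fun_prop]
theorem continuous_sinTaylor (n : ℕ) : Continuous (sinTaylor n) := by
  unfold sinTaylor; fun_prop

theorem cosTaylor_neg (n : ℕ) (x : ℝ) : cosTaylor n (-x) = cosTaylor n x := by
  simp only [cosTaylor, (even_two_mul _).neg_pow]

theorem sinTaylor_neg (n : ℕ) (x : ℝ) : sinTaylor n (-x) = -sinTaylor n x := by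
  simp only [sinTaylor, (odd_two_mul_add_one _).neg_pow, ← sum_neg_distrib]
  congr 1; ext i; ring

theorem hasDerivAt_sinTaylor (n : ℕ) (x : ℝ) : HasDerivAt (sinTaylor n) (cosTaylor n x) x := by
  induction n with
  | zero =>
    unfold sinTaylor cosTaylor
    simpa only [sum_range_zero] using hasDerivAt_const x (0 : ℝ)
  | succ n ih =>
    have h := ih.add (((hasDerivAt_pow (2 * n + 1) x).const_mul ((-1) ^ n : ℝ)).div_const
      ((2 * n + 1)! : ℝ))
    rw [show sinTaylor n + _ = sinTaylor (n + 1) from funext fun y => (sum_range_succ _ _).symm]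
      at h
    refine h.congr_deriv ?_
    rw [cosTaylor, cosTaylor, sum_range_succ, add_tsub_cancel_right, Nat.factorial_succ]
    push_cast
    field_simp

theorem hasDerivAt_cosTaylor_succ (n : ℕ) (x : ℝ) :
    HasDerivAt (cosTaylor (n + 1)) (-sinTaylor n x) x := by
  induction n with
  | zero =>
    unfold sinTaylor cosTaylor
    simpa using hasDerivAt_const x (1 : ℝ)
  | succ n ih =>
    have h := ih.add (((hasDerivAt_pow (2 * (n + 1)) x).const_mul ((-1) ^ (n + 1) : ℝ)).div_const
      ((2 * (n + 1))! : ℝ))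
    rw [show cosTaylor (n + 1) + _ = cosTaylor (n + 2) from
      funext fun y => (sum_range_succ _ _).symm] at h
    refine h.congr_deriv ?_
    rw [sinTaylor, sinTaylor, sum_range_succ, show 2 * (n + 1) = 2 * n + 1 + 1 by ring,
      add_tsub_cancel_right, Nat.factorial_succ]
    push_cast
    field_simp
    ring

theorem nonneg_of_hasDerivAt_nonneg {f f' : ℝ → ℝ} (hf : ∀ t, HasDerivAt f (f' t) t)
    (h0 : f 0 = 0) (hf' : ∀ t, 0 ≤ t → 0 ≤ f' t) {x : ℝ} (hx : 0 ≤ x) : 0 ≤ f x := by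
  have hmono : MonotoneOn f (Set.Ici 0) :=
    monotoneOn_of_hasDerivWithinAt_nonneg (convex_Ici 0)
      (fun t _ => (hf t).continuousAt.continuousWithinAt)
      (fun t _ => (hf t).hasDerivWithinAt)
      (fun t ht => hf' t (interior_subset ht))
  simpa [h0] using hmono Set.self_mem_Ici hx hx

/-- Each bound is the integral from `0` of the previous one. -/
theorem cos_sin_sub_taylor_alternating (n : ℕ) {x : ℝ} (hx : 0 ≤ x) :
    0 ≤ (-1) ^ (n + 1) * (cos x - cosTaylor (n + 1) x) ∧
      0 ≤ (-1) ^ (n + 1) * (sin x - sinTaylor (n + 1) x) := by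
  induction n generalizing x with
  | zero => simp [cosTaylor, sinTaylor, cos_le_one, sin_le hx]
  | succ n ih =>
    have hcos : ∀ t, 0 ≤ t → 0 ≤ (-1) ^ (n + 2) * (cos t - cosTaylor (n + 2) t) :=
      fun t ht => nonneg_of_hasDerivAt_nonneg
        (fun s => ((hasDerivAt_cos s).sub (hasDerivAt_cosTaylor_succ (n + 1) s)).const_mul _)
        (by simp [cosTaylor, sum_range_succ'])
        (fun s hs => by have := (ih hs).2; rw [pow_succ]; linarith) ht
    exact ⟨hcos x hx, nonneg_of_hasDerivAt_nonneg
      (fun s => ((hasDerivAt_sin s).sub (hasDerivAt_sinTaylor (n + 2) s)).const_mul _)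
      (by simp [sinTaylor]) hcos hx⟩

theorem cos_sub_cosTaylor_alternating (n : ℕ) (x : ℝ) :
    0 ≤ (-1) ^ (n + 1) * (cos x - cosTaylor (n + 1) x) := by
  rcases le_total 0 x with hx | hx
  · exact (cos_sin_sub_taylor_alternating n hx).1
  · simpa [cosTaylor_neg] using (cos_sin_sub_taylor_alternating n (neg_nonneg.2 hx)).1

theorem mul_sin_mul_sub_sinTaylor_alternating (n : ℕ) {k : ℝ} (hk : 0 ≤ k) (c : ℝ) :
    0 ≤ (-1) ^ (n + 1) * (c * (sin (k * c) - sinTaylor (n + 1) (k * c))) := by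
  rcases le_total 0 c with hc | hc
  · rw [mul_left_comm]
    exact mul_nonneg hc (cos_sin_sub_taylor_alternating n (mul_nonneg hk hc)).2
  · have h := mul_nonneg (neg_nonneg.2 hc)
      (cos_sin_sub_taylor_alternating n (mul_nonneg hk (neg_nonneg.2 hc))).2
    rw [mul_neg, sin_neg, sinTaylor_neg] at h
    linarith

theorem integral_cos_pow_two_mul (n : ℕ) :
    ∫ θ in (0:ℝ)..π, cos θ ^ (2 * n) = π * (2 * n)! / (4 ^ n * (n ! : ℝ) ^ 2) := by
  induction n with
  | zero => simp
  | succ n ih =>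
    rw [show 2 * (n + 1) = 2 * n + 2 by ring, integral_cos_pow, ih, Nat.factorial_succ,
      Nat.factorial_succ, Nat.factorial_succ]
    simp only [cos_pi, sin_pi, sin_zero, mul_zero, sub_self, zero_div, zero_add]
    push_cast
    field_simp
    ring

/-- The first-order Bessel function `J₁ = -J₀'`. -/
noncomputable def J1 (k : ℝ) : ℝ :=
  (1 / π) * ∫ θ in (0:ℝ)..π, cos θ * sin (k * cos θ)

noncomputable def J0Partial (n : ℕ) (k : ℝ) : ℝ :=
  ∑ i ∈ range n, (-1) ^ i * (k / 2) ^ (2 * i) / (i ! : ℝ) ^ 2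

noncomputable def J1Partial (n : ℕ) (k : ℝ) : ℝ :=
  ∑ i ∈ range n, (-1) ^ i * (k / 2) ^ (2 * i + 1) / (i ! * (i + 1)! : ℝ)

theorem integral_cosTaylor_mul_cos (n : ℕ) (k : ℝ) :
    ∫ θ in (0:ℝ)..π, cosTaylor n (k * cos θ) = π * J0Partial n k := by
  simp only [cosTaylor, J0Partial, mul_sum]
  rw [intervalIntegral.integral_finsetSum fun i _ => by
    apply Continuous.intervalIntegrable; fun_prop]
  refine sum_congr rfl fun i _ => ?_
  simp only [mul_pow, mul_div_assoc, ← mul_assoc, mul_div_right_comm _ (cos _ ^ _)]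
  rw [intervalIntegral.integral_const_mul, integral_cos_pow_two_mul, div_pow, pow_mul (2:ℝ)]
  field_simp
  norm_num

theorem integral_cos_mul_sinTaylor_mul_cos (n : ℕ) (k : ℝ) :
    ∫ θ in (0:ℝ)..π, cos θ * sinTaylor n (k * cos θ) = π * J1Partial n k := by
  simp only [sinTaylor, J1Partial, mul_sum]
  rw [intervalIntegral.integral_finsetSum fun i _ => by
    apply Continuous.intervalIntegrable; fun_prop]
  refine sum_congr rfl fun i _ => ?_
  have hpow : ∀ θ, cos θ * ((-1) ^ i * (k * cos θ) ^ (2 * i + 1) / (2 * i + 1)!) =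
      (-1) ^ i * k ^ (2 * i + 1) / (2 * i + 1)! * cos θ ^ (2 * (i + 1)) := fun θ => by ring
  simp only [hpow]
  rw [intervalIntegral.integral_const_mul, integral_cos_pow_two_mul, div_pow, pow_succ (2:ℝ),
    pow_mul (2:ℝ), show 2 * (i + 1) = 2 * i + 1 + 1 by ring, Nat.factorial_succ (2 * i + 1),
    Nat.factorial_succ i]
  push_cast
  field_simp
  ring

theorem mul_sub_integral_nonneg {μ : Measure ℝ} {f g : ℝ → ℝ} {a b s : ℝ} (hab : a ≤ b)
    (hf : IntervalIntegrable f μ a b) (hg : IntervalIntegrable g μ a b)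
    (h : ∀ θ ∈ Set.Icc a b, 0 ≤ s * (f θ - g θ)) :
    0 ≤ s * ((∫ θ in a..b, f θ ∂μ) - ∫ θ in a..b, g θ ∂μ) := by
  rw [← intervalIntegral.integral_sub hf hg, ← intervalIntegral.integral_const_mul]
  exact intervalIntegral.integral_nonneg hab h

theorem J0_sub_J0Partial_alternating (n : ℕ) (k : ℝ) :
    0 ≤ (-1) ^ (n + 1) * (J0 k - J0Partial (n + 1) k) := by
  have h := mul_sub_integral_nonneg (μ := volume) (f := fun θ => cos (k * cos θ))
    (g := fun θ => cosTaylor (n + 1) (k * cos θ)) pi_pos.le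
    (by apply Continuous.intervalIntegrable; fun_prop)
    (by apply Continuous.intervalIntegrable; fun_prop)
    (fun θ _ => cos_sub_cosTaylor_alternating n (k * cos θ))
  rw [integral_cosTaylor_mul_cos] at h
  have hJ : J0 k - J0Partial (n + 1) k =
      π⁻¹ * ((∫ θ in (0:ℝ)..π, cos (k * cos θ)) - π * J0Partial (n + 1) k) := by
    rw [J0, mul_sub, inv_mul_cancel_left₀ pi_ne_zero, one_div]
  rw [hJ, mul_left_comm]
  exact mul_nonneg (inv_nonneg.2 pi_pos.le) h

theorem J1_sub_J1Partial_alternating (n : ℕ) {k : ℝ} (hk : 0 ≤ k) :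
    0 ≤ (-1) ^ (n + 1) * (J1 k - J1Partial (n + 1) k) := by
  have h := mul_sub_integral_nonneg (μ := volume) (f := fun θ => cos θ * sin (k * cos θ))
    (g := fun θ => cos θ * sinTaylor (n + 1) (k * cos θ)) pi_pos.le
    (by apply Continuous.intervalIntegrable; fun_prop)
    (by apply Continuous.intervalIntegrable; fun_prop)
    (fun θ _ => by rw [← mul_sub]; exact mul_sin_mul_sub_sinTaylor_alternating n hk (cos θ))
  rw [integral_cos_mul_sinTaylor_mul_cos] at h
  have hJ : J1 k - J1Partial (n + 1) k =
      π⁻¹ * ((∫ θ in (0:ℝ)..π, cos θ * sin (k * cos θ)) - π * J1Partial (n + 1) k) := by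
    rw [J1, mul_sub, inv_mul_cancel_left₀ pi_ne_zero, one_div]
  rw [hJ, mul_left_comm]
  exact mul_nonneg (inv_nonneg.2 pi_pos.le) h

theorem hasDerivAt_integral_mul_comp_mul {μ : Measure ℝ} [IsLocallyFiniteMeasure μ]
    {f f' g u : ℝ → ℝ} {a b C : ℝ} (hf : ∀ x, HasDerivAt f (f' x) x) (hf'C : ∀ x, |f' x| ≤ C)
    (hg : Continuous g) (hu : Continuous u) (k : ℝ) :
    HasDerivAt (fun k => ∫ θ in a..b, g θ * f (k * u θ) ∂μ)
      (∫ θ in a..b, g θ * (u θ * f' (k * u θ)) ∂μ) k := by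
  have hfc : Continuous f := continuous_iff_continuousAt.2 fun x => (hf x).continuousAt
  have hf'm : Measurable f' := by
    rw [show f' = deriv f from funext fun x => (hf x).deriv.symm]
    exact measurable_deriv f
  refine (intervalIntegral.hasDerivAt_integral_of_dominated_loc_of_deriv_le
    (F := fun k θ => g θ * f (k * u θ)) (F' := fun k θ => g θ * (u θ * f' (k * u θ)))
    (bound := fun θ => |g θ * u θ| * C) Filter.univ_mem
    (Filter.Eventually.of_forall fun x => (by fun_prop : Continuous _).aestronglyMeasurable)
    ((by fun_prop : Continuous _).intervalIntegrable _ _)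
    (by fun_prop : Measurable _).aestronglyMeasurable
    (Filter.Eventually.of_forall fun θ _ x _ => ?_)
    ((by fun_prop : Continuous _).intervalIntegrable _ _)
    (Filter.Eventually.of_forall fun θ _ x _ => ?_)).2
  · rw [Real.norm_eq_abs, ← mul_assoc, abs_mul]
    exact mul_le_mul_of_nonneg_left (hf'C _) (abs_nonneg _)
  · exact (((hf _).comp x (hasDerivAt_mul_const (u θ))).const_mul (g θ)).congr_deriv (by ring)

theorem hasDerivAt_J0 (k : ℝ) : HasDerivAt J0 (-J1 k) k := by
  have h := hasDerivAt_integral_mul_comp_mul (μ := volume) (a := 0) (b := π) (g := fun _ => 1)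
    hasDerivAt_cos (fun x => by simpa using abs_sin_le_one x) continuous_const continuous_cos k
  simp only [one_mul, mul_neg, intervalIntegral.integral_neg] at h
  exact (h.const_mul (1 / π)).congr_deriv (by rw [J1, mul_neg])

/-- Bessel's equation `k J₁' = k J₀ - J₁`, obtained by integrating
`d/dθ (sin θ sin (k cos θ))` over `[0, π]`. -/
theorem integral_bessel_ode (k : ℝ) :
    k * ∫ θ in (0:ℝ)..π, cos θ * (cos θ * cos (k * cos θ)) =
      k * (∫ θ in (0:ℝ)..π, cos (k * cos θ)) - ∫ θ in (0:ℝ)..π, cos θ * sin (k * cos θ) := by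
  have hderiv : ∀ θ, HasDerivAt (fun θ => sin θ * sin (k * cos θ))
      (cos θ * sin (k * cos θ) - k * cos (k * cos θ) + k * (cos θ * (cos θ * cos (k * cos θ))))
      θ := fun θ =>
    ((hasDerivAt_sin θ).mul ((hasDerivAt_cos θ).const_mul k).sin).congr_deriv
      (by linear_combination -(k * cos (k * cos θ)) * sin_sq_add_cos_sq θ)
  have hFTC := intervalIntegral.integral_eq_sub_of_hasDerivAt (fun θ _ => hderiv θ)
    (Continuous.intervalIntegrable (by fun_prop) 0 π)
  rw [intervalIntegral.integral_add (Continuous.intervalIntegrable (by fun_prop) 0 π)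
      (Continuous.intervalIntegrable (by fun_prop) 0 π),
    intervalIntegral.integral_sub (Continuous.intervalIntegrable (by fun_prop) 0 π)
      (Continuous.intervalIntegrable (by fun_prop) 0 π),
    intervalIntegral.integral_const_mul, intervalIntegral.integral_const_mul] at hFTC
  simp only [sin_pi, sin_zero, zero_mul, sub_zero] at hFTC
  linarith

theorem hasDerivAt_J1 {k : ℝ} (hk : k ≠ 0) : HasDerivAt J1 (J0 k - J1 k / k) k := by
  have h := hasDerivAt_integral_mul_comp_mul (μ := volume) (a := 0) (b := π) (g := cos)
    hasDerivAt_sin abs_cos_le_one continuous_cos continuous_cos k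
  refine (h.const_mul (1 / π)).congr_deriv ?_
  have hode := integral_bessel_ode k
  rw [J0, J1]
  set I₀ := ∫ θ in (0:ℝ)..π, cos (k * cos θ)
  set I₁ := ∫ θ in (0:ℝ)..π, cos θ * sin (k * cos θ)
  set I₂ := ∫ θ in (0:ℝ)..π, cos θ * (cos θ * cos (k * cos θ))
  field_simp
  linarith

noncomputable def besselEnergy (x : ℝ) : ℝ :=
  x * (J0 x ^ 2 + J1 x ^ 2) - J0 x * J1 x + J0 x ^ 2 / (2 * x)

theorem hasDerivAt_besselEnergy {x : ℝ} (hx : x ≠ 0) :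
    HasDerivAt besselEnergy (-(J0 x ^ 2 / (2 * x ^ 2))) x := by
  have h0 := hasDerivAt_J0 x
  have h1 := hasDerivAt_J1 hx
  have h := (((hasDerivAt_id x).mul ((h0.pow 2).add (h1.pow 2))).sub (h0.mul h1)).add
    ((h0.pow 2).div ((hasDerivAt_id x).const_mul 2) (by simpa using hx))
  refine h.congr_deriv ?_
  simp only [Pi.add_apply, Pi.pow_apply, id_eq, Nat.cast_ofNat]
  field_simp
  ring

theorem besselEnergy_antitoneOn : AntitoneOn besselEnergy (Set.Ioi 0) :=
  antitoneOn_of_hasDerivWithinAt_nonpos (convex_Ioi 0)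
    (fun x hx => (hasDerivAt_besselEnergy (ne_of_gt hx)).continuousAt.continuousWithinAt)
    (fun x hx => (hasDerivAt_besselEnergy (ne_of_gt (interior_subset hx))).hasDerivWithinAt)
    (fun x _ => neg_nonpos.2 (by positivity))

theorem mul_J0_sq_le_besselEnergy {x : ℝ} (hx : 0 < x) : x * J0 x ^ 2 ≤ besselEnergy x := by
  have hsq : besselEnergy x - x * J0 x ^ 2 =
      ((2 * x * J1 x - J0 x) ^ 2 + J0 x ^ 2) / (4 * x) := by
    rw [besselEnergy]; field_simp; ring
  have : 0 ≤ besselEnergy x - x * J0 x ^ 2 := by rw [hsq]; positivity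
  linarith

theorem besselEnergy_nine_fifths_le : besselEnergy (9 / 5) ≤ 7 / 10 := by
  have hJ0_ge := J0_sub_J0Partial_alternating 3 (9 / 5)
  have hJ0_le := J0_sub_J0Partial_alternating 4 (9 / 5)
  have hJ1_le := J1_sub_J1Partial_alternating 2 (k := 9 / 5) (by norm_num)
  have hJ1_ge := J1_sub_J1Partial_alternating 3 (k := 9 / 5) (by norm_num)
  norm_num [J0Partial, J1Partial, sum_range_succ, Nat.factorial] at hJ0_ge hJ0_le hJ1_le hJ1_ge
  have hab := mul_nonneg (sub_nonneg.2 hJ0_ge) (sub_nonneg.2 hJ1_ge)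
  have haa := mul_nonneg (sub_nonneg.2 hJ0_le) (sub_nonneg.2 hJ0_ge)
  have hbb := mul_nonneg (sub_nonneg.2 hJ1_le) (sub_nonneg.2 hJ1_ge)
  rw [besselEnergy]
  ring_nf at hab haa hbb ⊢
  linarith

theorem mul_J0_sq_le_of_le_nine_fifths {k : ℝ} (hk₀ : 0 ≤ k) (hk : k ≤ 9 / 5) :
    k * J0 k ^ 2 ≤ 7 / 10 := by
  have hJ0_ge := J0_sub_J0Partial_alternating 1 k
  have hJ0_le := J0_sub_J0Partial_alternating 2 k
  norm_num [J0Partial, sum_range_succ] at hJ0_ge hJ0_le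
  have hp : 0 ≤ 1 - k ^ 2 / 8 := by nlinarith
  have hJ0_nonneg : 0 ≤ J0 k := by nlinarith
  have hJ0_le' : J0 k ≤ (1 - k ^ 2 / 8) ^ 2 := by linarith
  calc k * J0 k ^ 2 ≤ k * ((1 - k ^ 2 / 8) ^ 2) ^ 2 := by gcongr
    _ ≤ 7 / 10 := by
      -- the maximum of `k (1 - k²/8)⁴` is at `k² = 8/9`
      nlinarith [sq_nonneg (9 * k ^ 2 - 8), mul_nonneg hk₀ (sq_nonneg (9 * k ^ 2 - 8)),
        pow_nonneg hp 3, mul_nonneg hk₀ (pow_nonneg hp 3),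
        mul_nonneg (mul_nonneg hk₀ (by linarith : 0 ≤ 8 - k ^ 2)) (sq_nonneg (9 * k ^ 2 - 8))]

theorem seven_tenths_le_two_rpow_neg_half : (7 : ℝ) / 10 ≤ 2 ^ (-(1:ℝ) / 2) := by
  rw [neg_div, rpow_neg zero_le_two, ← sqrt_eq_rpow, le_inv_comm₀ (by norm_num) (by positivity)]
  nlinarith [sq_sqrt (zero_le_two : (0:ℝ) ≤ 2), sqrt_nonneg 2]

theorem J0_sq_weighted_bound (k : ℝ) (hk : 0 ≤ k) :
    k * (J0 k) ^ 2 ≤ (2:ℝ) ^ (-(1:ℝ)/2) := by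
  refine le_trans ?_ seven_tenths_le_two_rpow_neg_half
  rcases le_total k (9 / 5) with hsmall | hlarge
  · exact mul_J0_sq_le_of_le_nine_fifths hk hsmall
  · have hpos : 0 < k := by linarith
    calc k * J0 k ^ 2 ≤ besselEnergy k := mul_J0_sq_le_besselEnergy hpos
      _ ≤ besselEnergy (9 / 5) :=
        besselEnergy_antitoneOn (by norm_num : (0:ℝ) < 9 / 5) hpos hlarge
      _ ≤ 7 / 10 := besselEnergy_nine_fifths_le
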